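/- arXiv:0706.0309 — 2 statements merged into one kernel-verified Lean document; each statement's English description precedes it below -/
import Mathlib

section
/- For every n ≥ 5, every decycling set S of the square of the n-cycle Cₙ² contains two cyclically consecutive vertices, i.e., there exists i ∈ ℤ/nℤ with both i ∈ S and i + 1 ∈ S. -/
/-!
If `S` contains no two consecutive vertices, then every vertex `t` has a neighbour
`t + 1` or `t + 2` outside `S` and a neighbour `t - 1` or `t - 2` outside `S`; for `n ≥ 5`
these two are distinct. So `Cₙ² - S` has minimum degree at least two, whereas in a finite
forest the end of a longest path has at most one neighbour.
-/

open SimpleGraph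

/-- `S` is a decycling set of `G` if the subgraph of `G` induced on the complement of `S`
is acyclic. -/
def SimpleGraph.IsDecyclingSet {V : Type*} (G : SimpleGraph V) (S : Set V) : Prop :=
  (G.induce Sᶜ).IsAcyclic

/-- The decycling number `∇(G)` of `G`: the minimum cardinality of a decycling set of `G`. -/
noncomputable def SimpleGraph.decyclingNumber {V : Type*} (G : SimpleGraph V) : ℕ :=
  sInf {k | ∃ S : Set V, G.IsDecyclingSet S ∧ S.ncard = k}

/-- The square `Cₙ²` of the `n`-cycle: vertex set `ZMod n`, with `i` adjacent to `j` iff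
`i ≠ j` and `i - j ≡ ±1` or `±2 (mod n)`. -/
def cycleSquare (n : ℕ) : SimpleGraph (ZMod n) where
  Adj i j := i ≠ j ∧ (i - j = 1 ∨ j - i = 1 ∨ i - j = 2 ∨ j - i = 2)
  symm := ⟨by intro i j ⟨h, hd⟩; exact ⟨h.symm, by tauto⟩⟩
  loopless := ⟨by intro i ⟨h, _⟩; exact h rfl⟩

namespace SimpleGraph

variable {V : Type*} {G : SimpleGraph V}

theorem IsAcyclic.exists_neighborSet_subsingleton [Nonempty V] [Finite G.edgeSet]
    (hG : G.IsAcyclic) : ∃ v, (G.neighborSet v).Subsingleton := by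
  obtain ⟨u, v, p, hp, hmax⟩ := Walk.exists_isPath_forall_isPath_length_le_length G
  have mem_support : ∀ w, G.Adj v w → w ∈ p.support := fun w hw => by
    by_contra hw'
    simpa using hmax _ _ _ (hp.concat hw' hw)
  refine ⟨v, fun w hw w' hw' => ?_⟩
  rw [hG.eq_penultimate_of_adj_end hp hw (mem_support w hw),
    hG.eq_penultimate_of_adj_end hp hw' (mem_support w' hw')]

end SimpleGraph

theorem ZMod.natCast_ne_zero_of_pos_of_lt {n a : ℕ} (ha : 0 < a) (han : a < n) :
    (a : ZMod n) ≠ 0 := by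
  rw [Ne, ZMod.natCast_eq_zero_iff]
  exact fun h => (Nat.le_of_dvd ha h).not_gt han

section CycleSquare

variable {n : ℕ}

theorem cycleSquare_adj_add_natCast (x : ZMod n) {a : ℕ} (ha : 0 < a) (ha₂ : a ≤ 2)
    (han : a < n) : (cycleSquare n).Adj x (x + a) := by
  refine ⟨fun h => ZMod.natCast_ne_zero_of_pos_of_lt ha han (by simpa using h), ?_⟩
  interval_cases a <;> simp

theorem cycleSquare_adj_sub_natCast (x : ZMod n) {a : ℕ} (ha : 0 < a) (ha₂ : a ≤ 2)
    (han : a < n) : (cycleSquare n).Adj x (x - (a : ZMod n)) := by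
  simpa using (cycleSquare_adj_add_natCast (x - (a : ZMod n)) ha ha₂ han).symm

theorem cycleSquare_exists_two_neighbors_not_mem (hn : 5 ≤ n) {S : Set (ZMod n)}
    (hS : ∀ i ∈ S, i + 1 ∉ S) (t : ZMod n) :
    ∃ u ∉ S, ∃ v ∉ S, u ≠ v ∧ (cycleSquare n).Adj t u ∧ (cycleSquare n).Adj t v := by
  obtain ⟨a, ha, ha₂, hu⟩ : ∃ a : ℕ, 0 < a ∧ a ≤ 2 ∧ t + a ∉ S := by
    by_cases h : t + 1 ∈ S
    · exact ⟨2, by omega, by omega, by simpa [add_assoc, one_add_one_eq_two] using hS _ h⟩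
    · exact ⟨1, by omega, by omega, by simpa using h⟩
  obtain ⟨b, hb, hb₂, hv⟩ : ∃ b : ℕ, 0 < b ∧ b ≤ 2 ∧ t - b ∉ S := by
    by_cases h : t - 1 ∈ S
    · refine ⟨2, by omega, by omega, fun h₂ => hS _ h₂ ?_⟩
      convert h using 1
      ring
    · exact ⟨1, by omega, by omega, by simpa using h⟩
  refine ⟨_, hu, _, hv, fun h => ?_, cycleSquare_adj_add_natCast t ha ha₂ (by omega),
    cycleSquare_adj_sub_natCast t hb hb₂ (by omega)⟩
  apply ZMod.natCast_ne_zero_of_pos_of_lt (n := n) (a := a + b) (by omega) (by omega)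
  push_cast
  linear_combination h

end CycleSquare

/-- For every `n ≥ 5`, every decycling set `S` of `Cₙ²` contains two cyclically consecutive
vertices: there is `i ∈ ℤ/nℤ` with `i ∈ S` and `i + 1 ∈ S`. -/
theorem cycleSquare_decyclingSet_consecutive_pair (n : ℕ) (hn : 5 ≤ n) (S : Set (ZMod n))
    (hS : (cycleSquare n).IsDecyclingSet S) :
    ∃ i : ZMod n, i ∈ S ∧ i + 1 ∈ S := by
  by_contra! hcon
  have : NeZero n := ⟨by omega⟩
  have : Nonempty (Sᶜ : Set (ZMod n)) := by
    by_cases h0 : (0 : ZMod n) ∈ S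
    · exact ⟨⟨0 + 1, hcon 0 h0⟩⟩
    · exact ⟨⟨0, h0⟩⟩
  obtain ⟨⟨t, ht⟩, hleaf⟩ := IsAcyclic.exists_neighborSet_subsingleton hS
  obtain ⟨u, hu, v, hv, huv, htu, htv⟩ := cycleSquare_exists_two_neighbors_not_mem hn hcon t
  exact huv (congrArg Subtype.val (hleaf (show (⟨u, hu⟩ : (Sᶜ : Set (ZMod n))) ∈ _ from htu)
    (show (⟨v, hv⟩ : (Sᶜ : Set (ZMod n))) ∈ _ from htv)))
end

section
/- Let n ≥ 3 with n ≡ 0 (mod 3). The set S = {0, 3, 6, …, n−3} ∪ {n−1} is a decycling set of the square of the n-cycle Cₙ² of cardinality n/3 + 1; indeed, the subgraph of Cₙ² induced on the complement of S is a path, hence acyclic. -/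
/-!
Number the vertices of the complement of `S` along the non-multiples of 3, `1, 2, 4, 5, 7, 8, …`.
Two such vertices adjacent in `Cₙ²` get consecutive numbers: a step of 2 between non-multiples
of 3 skips exactly one multiple of 3, and every edge of `Cₙ²` that wraps around meets `0` or
`n - 1`. So the numbering is an injective homomorphism into the path `hasse ℕ`, which is acyclic.
-/

open SimpleGraph

namespace SimpleGraph

lemma hasse_nat_adj {a b : ℕ} : (hasse ℕ).Adj a b ↔ a + 1 = b ∨ b + 1 = a := by
  simp [hasse_adj]

lemma isBridge_hasse_nat (k : ℕ) : (hasse ℕ).IsBridge s(k, k + 1) := by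
  rintro ⟨p⟩
  -- Without the edge `s(k, k + 1)`, no walk leaves the initial segment `{0, …, k}`.
  suffices h : ∀ {x y : ℕ}, ((hasse ℕ).deleteEdges {s(k, k + 1)}).Walk x y → x ≤ k → y ≤ k from
    absurd (h p le_rfl) (by omega)
  intro x y q
  induction q with
  | nil => exact id
  | cons hadj _ ih =>
    simp only [deleteEdges_adj, Set.mem_singleton_iff, Sym2.eq_iff, hasse_nat_adj] at hadj
    intro hx
    exact ih (by omega)

lemma isAcyclic_hasse_nat : (hasse ℕ).IsAcyclic := by
  refine isAcyclic_iff_forall_adj_isBridge.2 fun a b hab => ?_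
  rcases hasse_nat_adj.1 hab with rfl | rfl
  · exact isBridge_hasse_nat a
  · exact Sym2.eq_swap ▸ isBridge_hasse_nat b

end SimpleGraph

namespace CycleSquare

variable {n : ℕ}

def decyclingSet (n : ℕ) : Set (ZMod n) :=
  ((fun k : ℕ => ((3 * k : ℕ) : ZMod n)) '' {k | k < n / 3}) ∪ {((n - 1 : ℕ) : ZMod n)}

lemma val_natCast_three_mul [NeZero n] {k : ℕ} (hk : k < n / 3) :
    ((3 * k : ℕ) : ZMod n).val = 3 * k :=
  ZMod.val_cast_of_lt (by omega)

lemma val_natCast_sub_one [NeZero n] : ((n - 1 : ℕ) : ZMod n).val = n - 1 :=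
  ZMod.val_cast_of_lt (by have := NeZero.ne n; omega)

lemma mem_decyclingSet_iff [NeZero n] (h3 : n % 3 = 0) {x : ZMod n} :
    x ∈ decyclingSet n ↔ x.val % 3 = 0 ∨ x.val = n - 1 := by
  constructor
  · rintro (⟨k, hk, rfl⟩ | rfl)
    · exact .inl (by rw [val_natCast_three_mul hk]; omega)
    · exact .inr val_natCast_sub_one
  · have hx := x.val_lt
    rintro (hx3 | hxn)
    · refine .inl ⟨x.val / 3, show x.val / 3 < n / 3 by omega, ?_⟩
      simp only [Nat.mul_div_cancel' (Nat.dvd_of_mod_eq_zero hx3), ZMod.natCast_zmod_val]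
    · exact .inr (by rw [Set.mem_singleton_iff, ← hxn, ZMod.natCast_zmod_val])

lemma ncard_decyclingSet [NeZero n] : (decyclingSet n).ncard = n / 3 + 1 := by
  have hinj : Set.InjOn (fun k : ℕ => ((3 * k : ℕ) : ZMod n)) {k | k < n / 3} := by
    intro a ha b hb hab
    have := congrArg ZMod.val hab
    simp only [val_natCast_three_mul ha, val_natCast_three_mul hb] at this
    omega
  have hdisj :
      ((n - 1 : ℕ) : ZMod n) ∉ (fun k : ℕ => ((3 * k : ℕ) : ZMod n)) '' {k | k < n / 3} := by
    rintro ⟨k, hk : k < n / 3, hkn⟩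
    have hn := NeZero.ne n
    have := congrArg ZMod.val hkn
    simp only [val_natCast_three_mul hk, val_natCast_sub_one] at this
    omega
  rw [decyclingSet, Set.ncard_union_eq (Set.disjoint_singleton_right.2 hdisj),
    hinj.ncard_image, Set.ncard_singleton]
  exact congrArg (· + 1) (Set.ncard_Iio_nat _)

/-- The position of `a` in the increasing enumeration `1, 2, 4, 5, 7, 8, …` of the non-multiples
of 3. -/
def pathIndex (a : ℕ) : ℕ := a - a / 3 - 1

lemma pathIndex_injOn : Set.InjOn pathIndex {a | a % 3 ≠ 0} := by
  intro a ha b hb hab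
  simp only [pathIndex, Set.mem_ofPred_eq] at ha hb hab
  omega

lemma pathIndex_add {a d : ℕ} (ha : a % 3 ≠ 0) (had : (a + d) % 3 ≠ 0) (hd0 : 0 < d) (hd2 : d ≤ 2) :
    pathIndex (a + d) = pathIndex a + 1 := by
  simp only [pathIndex]
  omega

lemma val_eq_val_add_of_sub_eq [NeZero n] (h3 : n % 3 = 0) {x y : ZMod n}
    (hx : x ∉ decyclingSet n) (hy : y ∉ decyclingSet n) {d : ℕ} (hd : d ≤ 2) (hxy : y - x = d) :
    y.val = x.val + d := by
  rw [mem_decyclingSet_iff h3] at hx hy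
  have hn : 3 ≤ n := by have := NeZero.ne n; omega
  have hval : y.val = (x.val + d) % n := by
    rw [sub_eq_iff_eq_add'.1 hxy, ZMod.val_add, ZMod.val_natCast,
      Nat.mod_eq_of_lt (show d < n by omega)]
  have := x.val_lt
  -- Wrapping around would need `x = n - 1`, or land on `0`.
  rcases lt_or_ge (x.val + d) n with hlt | hge
  · rwa [Nat.mod_eq_of_lt hlt] at hval
  · rw [show x.val + d = n by omega, Nat.mod_self] at hval
    omega

lemma val_mod_three_ne_zero [NeZero n] (h3 : n % 3 = 0) {x : ZMod n} (hx : x ∉ decyclingSet n) :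
    x.val % 3 ≠ 0 :=
  fun h => hx ((mem_decyclingSet_iff h3).2 (.inl h))

lemma pathIndex_val_of_sub_eq [NeZero n] (h3 : n % 3 = 0) {x y : ZMod n}
    (hx : x ∉ decyclingSet n) (hy : y ∉ decyclingSet n) {d : ℕ} (hd0 : 0 < d) (hd2 : d ≤ 2)
    (hxy : y - x = d) : pathIndex y.val = pathIndex x.val + 1 := by
  have hyx := val_eq_val_add_of_sub_eq h3 hx hy hd2 hxy
  have hy3 := val_mod_three_ne_zero h3 hy
  rw [hyx] at hy3 ⊢
  exact pathIndex_add (val_mod_three_ne_zero h3 hx) hy3 hd0 hd2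

lemma hasse_adj_pathIndex_val [NeZero n] (h3 : n % 3 = 0) {x y : ZMod n}
    (hx : x ∉ decyclingSet n) (hy : y ∉ decyclingSet n) (hxy : (cycleSquare n).Adj x y) :
    (hasse ℕ).Adj (pathIndex x.val) (pathIndex y.val) := by
  rw [hasse_nat_adj]
  obtain ⟨-, h | h | h | h⟩ := hxy
  · exact .inr (pathIndex_val_of_sub_eq h3 hy hx one_pos one_le_two (by exact_mod_cast h)).symm
  · exact .inl (pathIndex_val_of_sub_eq h3 hx hy one_pos one_le_two (by exact_mod_cast h)).symm
  · exact .inr (pathIndex_val_of_sub_eq h3 hy hx two_pos le_rfl (by exact_mod_cast h)).symm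
  · exact .inl (pathIndex_val_of_sub_eq h3 hx hy two_pos le_rfl (by exact_mod_cast h)).symm

lemma isDecyclingSet_decyclingSet [NeZero n] (h3 : n % 3 = 0) :
    (cycleSquare n).IsDecyclingSet (decyclingSet n) :=
  isAcyclic_hasse_nat.comap
    ⟨fun x => pathIndex x.1.val, fun {x y} => hasse_adj_pathIndex_val h3 x.2 y.2⟩
    fun x y hxy => Subtype.ext <| ZMod.val_injective n <|
      pathIndex_injOn (val_mod_three_ne_zero h3 x.2) (val_mod_three_ne_zero h3 y.2) hxy

end CycleSquare

open CycleSquare in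
/-- For `n ≥ 3` with `n ≡ 0 (mod 3)`, the set `S = {0, 3, 6, …, n−3} ∪ {n−1}` is a decycling
set of `Cₙ²` of cardinality `n/3 + 1`. -/
theorem cycleSquare_explicit_decyclingSet (n : ℕ) (hn : 3 ≤ n) (h3 : n % 3 = 0) :
    (cycleSquare n).IsDecyclingSet
        (((fun k : ℕ => ((3 * k : ℕ) : ZMod n)) '' {k | k < n / 3}) ∪ {((n - 1 : ℕ) : ZMod n)}) ∧
      (((fun k : ℕ => ((3 * k : ℕ) : ZMod n)) '' {k | k < n / 3}) ∪
          {((n - 1 : ℕ) : ZMod n)}).ncard = n / 3 + 1 := by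
  have : NeZero n := ⟨by omega⟩
  exact ⟨isDecyclingSet_decyclingSet h3, ncard_decyclingSet⟩
end
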